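/- Given a string T of length n and a string attractor of size γ for T, there exists a straight-line program (SLP) generating exactly T of size O(γ log²(n/γ)). -/

import Mathlib

def IsAttractor {α : Type*} (S : List α) (Γ : Finset ℕ) : Prop :=
  (∀ j ∈ Γ, j < S.length) ∧
  ∀ i l : ℕ, i + l ≤ S.length → l ≠ 0 →
    ∃ i', i' + l ≤ S.length ∧ (S.drop i').take l = (S.drop i).take l ∧
      ∃ j ∈ Γ, i' ≤ j ∧ j < i' + l

/-- A straight-line program: `g` rules `X_k → A_k B_k`, where each `A_k`, `B_k`
is a nonterminal of smaller index or a terminal; `exp k` is the (unique) string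
derived by nonterminal `k`. Its size is the number `g` of productions. -/
structure SLP (α : Type*) where
  g : ℕ
  rhs : Fin g → (Fin g ⊕ α) × (Fin g ⊕ α)
  lt₁ : ∀ k i, (rhs k).1 = Sum.inl i → (i : ℕ) < (k : ℕ)
  lt₂ : ∀ k i, (rhs k).2 = Sum.inl i → (i : ℕ) < (k : ℕ)
  exp : Fin g → List α
  exp_spec : ∀ k, exp k =
    (Sum.elim exp (fun a => [a]) (rhs k).1) ++ (Sum.elim exp (fun a => [a]) (rhs k).2)

/-- Expansion of a symbol (nonterminal or terminal). -/
def SLP.symExp {α : Type*} (P : SLP α) : Fin P.g ⊕ α → List α :=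
  Sum.elim P.exp (fun a => [a])

namespace AttSLP
set_option linter.unusedSectionVars false

inductive BT (α : Type) : Type
  | leaf : α → BT α
  | node : BT α → BT α → BT α
deriving DecidableEq

variable {α : Type}

def flat : BT α → List α
  | .leaf a => [a]
  | .node l r => flat l ++ flat r

def ht : BT α → ℕ
  | .leaf _ => 0
  | .node l r => max (ht l) (ht r) + 1

def sz : BT α → ℕ
  | .leaf _ => 1
  | .node l r => sz l + sz r + 1

lemma flat_length_pos (t : BT α) : 0 < (flat t).length := by
  induction t with
  | leaf a => simp [flat]
  | node l r ihl ihr => simp [flat]; omega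

section Dec
variable [DecidableEq α]

def subs : BT α → Finset (BT α)
  | .leaf _ => ∅
  | .node l r => insert (.node l r) (subs l ∪ subs r)

lemma subs_left_subset (l r : BT α) : subs l ⊆ subs (.node l r) := by
  intro x hx; simp [subs]; tauto

lemma subs_right_subset (l r : BT α) : subs r ⊆ subs (.node l r) := by
  intro x hx; simp [subs]; tauto

lemma mem_subs_node (l r : BT α) : BT.node l r ∈ subs (.node l r) := by
  simp [subs]

/-- every member of `subs t` is a node -/
lemma subs_is_node (t : BT α) : ∀ u ∈ subs t, ∃ l r, u = BT.node l r := by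
  induction t with
  | leaf a => simp [subs]
  | node l r ihl ihr =>
    intro u hu
    simp [subs] at hu
    rcases hu with h | h | h
    · exact ⟨l, r, h⟩
    · exact ihl u h
    · exact ihr u h

lemma subs_closed (t : BT α) : ∀ l r, BT.node l r ∈ subs t →
    (subs l ⊆ subs t ∧ subs r ⊆ subs t) := by
  induction t with
  | leaf a => simp [subs]
  | node x y ihx ihy =>
    intro l r h
    simp only [subs, Finset.mem_insert, Finset.mem_union] at h
    rcases h with h | h | h
    · cases h
      constructor
      · exact subs_left_subset _ _
      · exact subs_right_subset _ _
    · obtain ⟨h1, h2⟩ := ihx l r h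
      exact ⟨h1.trans (subs_left_subset _ _), h2.trans (subs_left_subset _ _)⟩
    · obtain ⟨h1, h2⟩ := ihy l r h
      exact ⟨h1.trans (subs_right_subset _ _), h2.trans (subs_right_subset _ _)⟩

lemma mem_subs_of_node (l r : BT α) (t : BT α) (h : BT.node l r ∈ subs t) :
    ∀ x y, l = BT.node x y → l ∈ subs t := by
  intro x y hl
  have := (subs_closed t l r h).1
  apply this
  rw [hl]; exact mem_subs_node x y

lemma mem_subs_of_node' (l r : BT α) (t : BT α) (h : BT.node l r ∈ subs t) :
    ∀ x y, r = BT.node x y → r ∈ subs t := by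
  intro x y hr
  have := (subs_closed t l r h).2
  apply this
  rw [hr]; exact mem_subs_node x y

lemma sz_lt_left (l r : BT α) : sz l < sz (BT.node l r) := by simp [sz]
lemma sz_lt_right (l r : BT α) : sz r < sz (BT.node l r) := by simp [sz]

end Dec





set_option linter.unusedSectionVars false

variable {α : Type}

/-- slice S[a..b) with clamping -/
def slc (S : List α) (a b : ℕ) : List α := (S.drop a).take (b - a)

lemma slc_length (S : List α) (a b : ℕ) :
    (slc S a b).length = min (b - a) (S.length - a) := by
  simp [slc]

lemma slc_append (S : List α) {a b c : ℕ} (h1 : a ≤ b) (h2 : b ≤ c) :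
    slc S a c = slc S a b ++ slc S b c := by
  unfold slc
  have h3 : c - a = (b - a) + (c - b) := by omega
  have h4 : a + (b - a) = b := by omega
  rw [h3, List.take_add, List.drop_drop, h4]

lemma slc_drop (S : List α) (a b k : ℕ) :
    (slc S a b).drop k = slc S (a + k) b := by
  unfold slc
  rw [List.drop_take, List.drop_drop]
  congr 1
  omega

lemma slc_take (S : List α) {a b : ℕ} (k : ℕ) (h : k ≤ b - a) :
    (slc S a b).take k = slc S a (a + k) := by
  unfold slc
  rw [List.take_take]
  congr 1
  omega

lemma slc_self (S : List α) (a : ℕ) : slc S a a = [] := by simp [slc]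

lemma slc_zero (S : List α) (b : ℕ) (h : S.length ≤ b) : slc S 0 b = S := by
  unfold slc
  simp only [List.drop_zero, Nat.sub_zero]
  exact List.take_of_length_le h

lemma slc_len_le (S : List α) (a b : ℕ) : (slc S a b).length ≤ b - a := by
  rw [slc_length]; omega

/-- the canonical form of a slice with its true length -/
lemma slc_eq_take (S : List α) (a b : ℕ) :
    slc S a b = (S.drop a).take ((slc S a b).length) := by
  unfold slc
  rw [List.take_eq_take_iff]
  simp


section Extract
variable [DecidableEq α]

lemma suffix_tree (t : BT α) : ∀ (c : ℕ), 1 ≤ c → c ≤ (flat t).length →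
    ∃ (t' : BT α) (N : Finset (BT α)),
      flat t' = (flat t).drop ((flat t).length - c) ∧ ht t' ≤ ht t ∧
      subs t' ⊆ subs t ∪ N ∧ N.card ≤ ht t := by
  induction t with
  | leaf a =>
    intro c h1 h2
    simp [flat] at h2
    refine ⟨.leaf a, ∅, ?_, le_refl _, ?_, ?_⟩
    · have : c = 1 := by omega
      simp [this, flat]
    · simp
    · simp [ht]
  | node l r ihl ihr =>
    intro c h1 h2
    have hflat : flat (BT.node l r) = flat l ++ flat r := rfl
    have hlen : (flat (BT.node l r)).length = (flat l).length + (flat r).length := by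
      rw [hflat]; simp
    by_cases hc : c ≤ (flat r).length
    · obtain ⟨t', N, hf, hh, hs, hN⟩ := ihr c h1 hc
      refine ⟨t', N, ?_, ?_, ?_, ?_⟩
      · rw [hf, hflat]
        have harith : (flat l).length + (flat r).length - c
            = (flat l).length + ((flat r).length - c) := by omega
        rw [List.length_append, harith, List.drop_length_add_append]
      · calc ht t' ≤ ht r := hh
          _ ≤ ht (BT.node l r) := by simp only [ht]; omega
      · exact hs.trans (Finset.union_subset_union (subs_right_subset l r) (le_refl N))
      · calc N.card ≤ ht r := hN
          _ ≤ ht (BT.node l r) := by simp only [ht]; omega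
    · push_neg at hc
      set c' := c - (flat r).length with hc'
      have h1' : 1 ≤ c' := by omega
      have h2' : c' ≤ (flat l).length := by rw [hlen] at h2; omega
      obtain ⟨tl, Nl, hf, hh, hs, hN⟩ := ihl c' h1' h2'
      refine ⟨.node tl r, insert (BT.node tl r) Nl, ?_, ?_, ?_, ?_⟩
      · have : flat (BT.node tl r) = flat tl ++ flat r := rfl
        rw [this, hf, hflat, List.length_append, List.drop_append]
        have hlen2 : (flat r).length < c := hc
        have e1 : (flat l).length + (flat r).length - c = (flat l).length - c' := by
          rw [hlen] at h2; omega
        have e2 : (flat l).length - c' - (flat l).length = 0 := by omega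
        rw [e1, e2, List.drop_zero]
      · simp only [ht]
        have : ht tl ≤ ht l := hh
        omega
      · intro x hx
        simp only [subs, Finset.mem_insert, Finset.mem_union] at hx ⊢
        rcases hx with h | h | h
        · right; left; exact h
        · have := hs h
          simp only [Finset.mem_union] at this
          rcases this with h' | h'
          · left; right; left; exact h'
          · right; right; exact h'
        · left; right; right; exact h
      · calc (insert (BT.node tl r) Nl).card ≤ Nl.card + 1 := Finset.card_insert_le _ _
          _ ≤ ht l + 1 := by omega
          _ ≤ ht (BT.node l r) := by simp only [ht]; omega

lemma prefix_tree (t : BT α) : ∀ (c : ℕ), 1 ≤ c → c ≤ (flat t).length →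
    ∃ (t' : BT α) (N : Finset (BT α)),
      flat t' = (flat t).take c ∧ ht t' ≤ ht t ∧
      subs t' ⊆ subs t ∪ N ∧ N.card ≤ ht t := by
  induction t with
  | leaf a =>
    intro c h1 h2
    simp [flat] at h2
    refine ⟨.leaf a, ∅, ?_, le_refl _, ?_, ?_⟩
    · have : c = 1 := by omega
      simp [this, flat]
    · simp
    · simp [ht]
  | node l r ihl ihr =>
    intro c h1 h2
    have hflat : flat (BT.node l r) = flat l ++ flat r := rfl
    have hlen : (flat (BT.node l r)).length = (flat l).length + (flat r).length := by
      rw [hflat]; simp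
    by_cases hc : c ≤ (flat l).length
    · obtain ⟨t', N, hf, hh, hs, hN⟩ := ihl c h1 hc
      refine ⟨t', N, ?_, ?_, ?_, ?_⟩
      · rw [hf, hflat, List.take_append]
        have e2 : c - (flat l).length = 0 := by omega
        rw [e2]
        simp
      · calc ht t' ≤ ht l := hh
          _ ≤ ht (BT.node l r) := by simp only [ht]; omega
      · exact hs.trans (Finset.union_subset_union (subs_left_subset l r) (le_refl N))
      · calc N.card ≤ ht l := hN
          _ ≤ ht (BT.node l r) := by simp only [ht]; omega
    · push_neg at hc
      set c' := c - (flat l).length with hc'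
      have h1' : 1 ≤ c' := by omega
      have h2' : c' ≤ (flat r).length := by rw [hlen] at h2; omega
      obtain ⟨tr, Nr, hf, hh, hs, hN⟩ := ihr c' h1' h2'
      refine ⟨.node l tr, insert (BT.node l tr) Nr, ?_, ?_, ?_, ?_⟩
      · have : flat (BT.node l tr) = flat l ++ flat tr := rfl
        rw [this, hf, hflat, List.take_append]
        congr 1
        · rw [List.take_of_length_le (by omega)]
      · simp only [ht]
        have : ht tr ≤ ht r := hh
        omega
      · intro x hx
        simp only [subs, Finset.mem_insert, Finset.mem_union] at hx ⊢
        rcases hx with h | h | h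
        · right; left; exact h
        · left; right; left; exact h
        · have := hs h
          simp only [Finset.mem_union] at this
          rcases this with h' | h'
          · left; right; right; exact h'
          · right; right; exact h'
      · calc (insert (BT.node l tr) Nr).card ≤ Nr.card + 1 := Finset.card_insert_le _ _
          _ ≤ ht r + 1 := by omega
          _ ≤ ht (BT.node l r) := by simp only [ht]; omega

end Extract

/-! ### Option layer -/

def oflat : Option (BT α) → List α
  | none => []
  | some t => flat t

def oht : Option (BT α) → ℕ
  | none => 0
  | some t => ht t

def onode : Option (BT α) → Option (BT α) → Option (BT α)
  | none, b => b
  | some x, none => some x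
  | some x, some y => some (BT.node x y)

lemma oflat_onode (a b : Option (BT α)) : oflat (onode a b) = oflat a ++ oflat b := by
  cases a <;> cases b <;> simp [onode, oflat, flat]

lemma oht_onode (a b : Option (BT α)) : oht (onode a b) ≤ max (oht a) (oht b) + 1 := by
  cases a <;> cases b <;> simp [onode, oht, ht] <;> omega

section OptDec
variable [DecidableEq α]

def osubs : Option (BT α) → Finset (BT α)
  | none => ∅
  | some t => subs t

lemma osubs_onode (a b : Option (BT α)) :
    ∃ E : Finset (BT α), osubs (onode a b) ⊆ (osubs a ∪ osubs b) ∪ E ∧ E.card ≤ 1 := by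
  cases a with
  | none => exact ⟨∅, by simp [onode], by simp⟩
  | some x =>
    cases b with
    | none => exact ⟨∅, by simp [onode, osubs], by simp⟩
    | some y =>
      refine ⟨{BT.node x y}, ?_, by simp⟩
      intro u hu
      simp only [onode, osubs, subs, Finset.mem_insert, Finset.mem_union,
        Finset.mem_singleton] at hu ⊢
      tauto

/-- tiny strings (length ≤ 2) have small trees -/
lemma tiny_tree (w : List α) (hw : w.length ≤ 2) :
    ∃ T : Option (BT α), oflat T = w ∧ oht T ≤ 1 ∧ (osubs T).card ≤ 1 := by
  match w, hw with
  | [], _ => exact ⟨none, rfl, by simp [oht], by simp [osubs]⟩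
  | [a], _ => exact ⟨some (.leaf a), rfl, by simp [oht, ht], by simp [osubs, subs]⟩
  | [a, b], _ =>
    refine ⟨some (.node (.leaf a) (.leaf b)), rfl, ?_, ?_⟩
    · simp [oht, ht]
    · simp only [osubs, subs]
      simp

end OptDec

section Window
variable [DecidableEq α]

lemma slc_add_self (S : List α) (i l : ℕ) : slc S i (i + l) = (S.drop i).take l := by
  unfold slc
  congr 1
  omega

lemma window (S : List α) (Γ : Finset ℕ) (hA : IsAttractor S Γ)
    (u : ℕ) (f g : ℕ → Option (BT α)) (V : Finset (BT α))
    (hf : ∀ j, oflat (f j) = slc S (j + 1 - 2 * 2 ^ u) (j + 1))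
    (hg : ∀ j, oflat (g j) = slc S (j + 1) (j + 1 + 2 * 2 ^ u))
    (hhf : ∀ j, oht (f j) ≤ 2 * u + 1) (hhg : ∀ j, oht (g j) ≤ 2 * u + 1)
    (hVf : ∀ j ∈ Γ, osubs (f j) ⊆ V) (hVg : ∀ j ∈ Γ, osubs (g j) ⊆ V)
    (a b : ℕ) (hab : b - a ≤ 2 * 2 ^ u) :
    ∃ (T : Option (BT α)) (N : Finset (BT α)), oflat T = slc S a b ∧
      oht T ≤ 2 * u + 2 ∧ osubs T ⊆ V ∪ N ∧ N.card ≤ 4 * u + 3 := by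
  set n := S.length with hn
  set w := slc S a b with hwdef
  set l := w.length with hldef
  by_cases hl0 : l = 0
  · refine ⟨none, ∅, ?_, by simp [oht], by simp [osubs], by simp⟩
    have : w = [] := List.length_eq_zero_iff.mp hl0
    simp [oflat, this]
  · have hl1 : 1 ≤ l := by omega
    have hlmin : l = min (b - a) (n - a) := by rw [hldef, hwdef, slc_length]
    have hl2m : l ≤ 2 * 2 ^ u := by omega
    have haln : a + l ≤ n := by omega
    have hw_take : (S.drop a).take l = w := (slc_eq_take S a b).symm
    obtain ⟨i', hi'n, heq, j', hj'Γ, hij, hji⟩ := hA.2 a l haln hl0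
    have hj'n : j' < n := hA.1 j' hj'Γ
    set p := j' + 1 with hp
    set m := 2 ^ u with hm
    set x := p - 2 * m with hx
    -- the left piece: suffix of f j' of length c
    have hflen : (oflat (f j')).length = p - x := by
      rw [hf j', slc_length]
      omega
    set c := p - i' with hc
    have hc1 : 1 ≤ c := by omega
    have hix : x ≤ i' := by omega
    have hc2 : c ≤ (oflat (f j')).length := by rw [hflen]; omega
    obtain ⟨tL, htL⟩ : ∃ tL, f j' = some tL := by
      cases hfj : f j' with
      | none => rw [hfj] at hflen hc2; simp [oflat] at hc2; omega
      | some tL => exact ⟨tL, rfl⟩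
    have hflatL : flat tL = slc S x p := by
      have := hf j'
      rw [htL] at this
      exact this
    have hlenL : (flat tL).length = p - x := by
      have := hflen
      rw [htL] at this
      exact this
    obtain ⟨t₁, N₁, hf₁, hh₁, hs₁, hN₁⟩ := suffix_tree tL c hc1 (by rw [hlenL, ← hflen]; exact hc2)
    have hf₁' : flat t₁ = slc S i' p := by
      rw [hf₁, hlenL, hflatL]
      have e : p - x - c = i' - x := by omega
      rw [e, slc_drop]
      congr 1
      omega
    have hhtL : ht tL ≤ 2 * u + 1 := by
      have := hhf j'
      rw [htL] at this
      exact this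
    have hsubL : subs tL ⊆ V := by
      have := hVf j' hj'Γ
      rw [htL] at this
      exact this
    have hslc_whole : slc S i' (i' + l) = w := by
      rw [slc_add_self, heq, hw_take]
    set c₂ := (i' + l) - p with hc₂
    by_cases hc₂0 : c₂ = 0
    · -- no right piece
      refine ⟨some t₁, N₁, ?_, ?_, ?_, by omega⟩
      · have : p = i' + l := by omega
        rw [oflat, hf₁', this, hslc_whole]
      · calc oht (some t₁) = ht t₁ := rfl
          _ ≤ ht tL := hh₁
          _ ≤ 2 * u + 2 := by omega
      · calc osubs (some t₁) = subs t₁ := rfl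
          _ ⊆ subs tL ∪ N₁ := hs₁
          _ ⊆ V ∪ N₁ := Finset.union_subset_union hsubL (le_refl _)
    · have hc₂1 : 1 ≤ c₂ := by omega
      have hglen : (oflat (g j')).length = min (2 * m) (n - p) := by
        rw [hg j', slc_length]
        congr 1
        omega
      have hc₂2 : c₂ ≤ (oflat (g j')).length := by rw [hglen]; omega
      obtain ⟨tR, htR⟩ : ∃ tR, g j' = some tR := by
        cases hgj : g j' with
        | none => rw [hgj] at hc₂2; simp [oflat] at hc₂2; omega
        | some tR => exact ⟨tR, rfl⟩
      have hflatR : flat tR = slc S p (p + 2 * m) := by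
        have := hg j'; rw [htR] at this; exact this
      obtain ⟨t₂, N₂, hf₂, hh₂, hs₂, hN₂⟩ := prefix_tree tR c₂ hc₂1
        (by have := hc₂2; rw [htR] at this; exact this)
      have hf₂' : flat t₂ = slc S p (i' + l) := by
        rw [hf₂, hflatR, slc_take S c₂ (by omega)]
        congr 1
        omega
      have hhtR : ht tR ≤ 2 * u + 1 := by
        have := hhg j'; rw [htR] at this; exact this
      have hsubR : subs tR ⊆ V := by
        have := hVg j' hj'Γ; rw [htR] at this; exact this
      refine ⟨some (.node t₁ t₂), insert (BT.node t₁ t₂) (N₁ ∪ N₂), ?_, ?_, ?_, ?_⟩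
      · show flat (BT.node t₁ t₂) = w
        have : flat (BT.node t₁ t₂) = flat t₁ ++ flat t₂ := rfl
        rw [this, hf₁', hf₂', ← slc_append S (by omega) (by omega), hslc_whole]
      · show ht (BT.node t₁ t₂) ≤ 2 * u + 2
        have : ht (BT.node t₁ t₂) = max (ht t₁) (ht t₂) + 1 := rfl
        have h1 : ht t₁ ≤ ht tL := hh₁
        have h2 : ht t₂ ≤ ht tR := hh₂
        omega
      · show subs (BT.node t₁ t₂) ⊆ V ∪ insert (BT.node t₁ t₂) (N₁ ∪ N₂)
        intro y hy
        simp only [subs, Finset.mem_insert, Finset.mem_union] at hy ⊢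
        rcases hy with h | h | h
        · right; left; exact h
        · rcases Finset.mem_union.mp (hs₁ h) with h' | h'
          · left; exact hsubL h'
          · right; right; left; exact h'
        · rcases Finset.mem_union.mp (hs₂ h) with h' | h'
          · left; exact hsubR h'
          · right; right; right; exact h'
      · calc (insert (BT.node t₁ t₂) (N₁ ∪ N₂)).card ≤ (N₁ ∪ N₂).card + 1 :=
            Finset.card_insert_le _ _
          _ ≤ N₁.card + N₂.card + 1 := by
            have := Finset.card_union_le N₁ N₂
            omega
          _ ≤ 4 * u + 3 := by omega

end Window

section Levels
variable [DecidableEq α]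

lemma levels (S : List α) (Γ : Finset ℕ) (hA : IsAttractor S Γ) (u : ℕ) :
    ∃ (f g : ℕ → Option (BT α)) (V : Finset (BT α)),
      (∀ j, oflat (f j) = slc S (j + 1 - 2 * 2 ^ u) (j + 1)) ∧
      (∀ j, oflat (g j) = slc S (j + 1) (j + 1 + 2 * 2 ^ u)) ∧
      (∀ j, oht (f j) ≤ 2 * u + 1) ∧ (∀ j, oht (g j) ≤ 2 * u + 1) ∧
      (∀ j ∈ Γ, osubs (f j) ⊆ V) ∧ (∀ j ∈ Γ, osubs (g j) ⊆ V) ∧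
      V.card ≤ Γ.card * (8 * u * u + 6 * u + 2) := by
  induction u with
  | zero =>
    have h : ∀ j : ℕ, ∃ (Tf Tg : Option (BT α)),
        (oflat Tf = slc S (j + 1 - 2 * 2 ^ 0) (j + 1) ∧ oht Tf ≤ 1 ∧ (osubs Tf).card ≤ 1) ∧
        (oflat Tg = slc S (j + 1) (j + 1 + 2 * 2 ^ 0) ∧ oht Tg ≤ 1 ∧ (osubs Tg).card ≤ 1) := by
      intro j
      obtain ⟨Tf, h1, h2, h3⟩ := tiny_tree (slc S (j + 1 - 2 * 2 ^ 0) (j + 1))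
        (le_trans (slc_len_le _ _ _) (by omega))
      obtain ⟨Tg, h4, h5, h6⟩ := tiny_tree (slc S (j + 1) (j + 1 + 2 * 2 ^ 0))
        (le_trans (slc_len_le _ _ _) (by omega))
      exact ⟨Tf, Tg, ⟨h1, h2, h3⟩, ⟨h4, h5, h6⟩⟩
    choose f g hfp hgp using h
    refine ⟨f, g, Γ.biUnion (fun j => osubs (f j) ∪ osubs (g j)),
      fun j => (hfp j).1, fun j => (hgp j).1,
      fun j => le_trans (hfp j).2.1 (by omega), fun j => le_trans (hgp j).2.1 (by omega),
      ?_, ?_, ?_⟩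
    · intro j hj y hy
      exact Finset.mem_biUnion.mpr ⟨j, hj, Finset.mem_union_left _ hy⟩
    · intro j hj y hy
      exact Finset.mem_biUnion.mpr ⟨j, hj, Finset.mem_union_right _ hy⟩
    · calc (Γ.biUnion (fun j => osubs (f j) ∪ osubs (g j))).card
          ≤ ∑ j ∈ Γ, (osubs (f j) ∪ osubs (g j)).card := Finset.card_biUnion_le
        _ ≤ ∑ j ∈ Γ, 2 := by
            apply Finset.sum_le_sum
            intro j hj
            calc (osubs (f j) ∪ osubs (g j)).card
                ≤ (osubs (f j)).card + (osubs (g j)).card := Finset.card_union_le _ _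
              _ ≤ 2 := by have := (hfp j).2.2; have := (hgp j).2.2; omega
        _ = Γ.card * 2 := by rw [Finset.sum_const, smul_eq_mul]
        _ ≤ Γ.card * (8 * 0 * 0 + 6 * 0 + 2) := by omega
  | succ u ih =>
    obtain ⟨f, g, V, hf, hg, hhf, hhg, hVf, hVg, hVcard⟩ := ih
    have hm4 : 2 * 2 ^ (u + 1) = 4 * 2 ^ u := by rw [pow_succ]; ring
    have hstep : ∀ j : ℕ, ∃ (Tf Tg : Option (BT α)) (N : Finset (BT α)),
        oflat Tf = slc S (j + 1 - 2 * 2 ^ (u + 1)) (j + 1) ∧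
        oflat Tg = slc S (j + 1) (j + 1 + 2 * 2 ^ (u + 1)) ∧
        oht Tf ≤ 2 * (u + 1) + 1 ∧ oht Tg ≤ 2 * (u + 1) + 1 ∧
        osubs Tf ⊆ V ∪ N ∧ osubs Tg ⊆ V ∪ N ∧ N.card ≤ 16 * u + 14 := by
      intro j
      set m := 2 ^ u with hm
      obtain ⟨TA, NA, hA1, hA2, hA3, hA4⟩ := window S Γ hA u f g V hf hg hhf hhg hVf hVg
        (j + 1 - 4 * m) (j + 1 - 2 * m) (by omega)
      obtain ⟨TB, NB, hB1, hB2, hB3, hB4⟩ := window S Γ hA u f g V hf hg hhf hhg hVf hVg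
        (j + 1 - 2 * m) (j + 1) (by omega)
      obtain ⟨TC, NC, hC1, hC2, hC3, hC4⟩ := window S Γ hA u f g V hf hg hhf hhg hVf hVg
        (j + 1) (j + 1 + 2 * m) (by omega)
      obtain ⟨TD, ND, hD1, hD2, hD3, hD4⟩ := window S Γ hA u f g V hf hg hhf hhg hVf hVg
        (j + 1 + 2 * m) (j + 1 + 4 * m) (by omega)
      obtain ⟨Ef, hEf, hEfc⟩ := osubs_onode TA TB
      obtain ⟨Eg, hEg, hEgc⟩ := osubs_onode TC TD
      refine ⟨onode TA TB, onode TC TD, NA ∪ NB ∪ Ef ∪ (NC ∪ ND ∪ Eg), ?_, ?_, ?_, ?_, ?_, ?_, ?_⟩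
      · rw [oflat_onode, hA1, hB1, hm4, ← slc_append S (by omega) (by omega)]
      · rw [oflat_onode, hC1, hD1, hm4, ← slc_append S (by omega) (by omega)]
      · have := oht_onode TA TB
        omega
      · have := oht_onode TC TD
        omega
      · intro y hy
        rcases Finset.mem_union.mp (hEf hy) with h | h
        · rcases Finset.mem_union.mp h with h' | h'
          · rcases Finset.mem_union.mp (hA3 h') with h'' | h''
            · exact Finset.mem_union_left _ h''
            · apply Finset.mem_union_right
              apply Finset.mem_union_left
              apply Finset.mem_union_left
              exact Finset.mem_union_left _ h''
          · rcases Finset.mem_union.mp (hB3 h') with h'' | h''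
            · exact Finset.mem_union_left _ h''
            · apply Finset.mem_union_right
              apply Finset.mem_union_left
              apply Finset.mem_union_left
              exact Finset.mem_union_right _ h''
        · apply Finset.mem_union_right
          apply Finset.mem_union_left
          exact Finset.mem_union_right _ h
      · intro y hy
        rcases Finset.mem_union.mp (hEg hy) with h | h
        · rcases Finset.mem_union.mp h with h' | h'
          · rcases Finset.mem_union.mp (hC3 h') with h'' | h''
            · exact Finset.mem_union_left _ h''
            · apply Finset.mem_union_right
              apply Finset.mem_union_right
              apply Finset.mem_union_left
              exact Finset.mem_union_left _ h''
          · rcases Finset.mem_union.mp (hD3 h') with h'' | h''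
            · exact Finset.mem_union_left _ h''
            · apply Finset.mem_union_right
              apply Finset.mem_union_right
              apply Finset.mem_union_left
              exact Finset.mem_union_right _ h''
        · apply Finset.mem_union_right
          apply Finset.mem_union_right
          exact Finset.mem_union_right _ h
      · have c1 := Finset.card_union_le (NA ∪ NB ∪ Ef) (NC ∪ ND ∪ Eg)
        have c2 := Finset.card_union_le (NA ∪ NB) Ef
        have c3 := Finset.card_union_le NA NB
        have c4 := Finset.card_union_le (NC ∪ ND) Eg
        have c5 := Finset.card_union_le NC ND
        omega
    choose f' g' N hf' hg' hhf' hhg' hsf' hsg' hNc using hstep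
    refine ⟨f', g', V ∪ Γ.biUnion N, hf', hg', hhf', hhg', ?_, ?_, ?_⟩
    · intro j hj y hy
      rcases Finset.mem_union.mp (hsf' j hy) with h | h
      · exact Finset.mem_union_left _ h
      · exact Finset.mem_union_right _ (Finset.mem_biUnion.mpr ⟨j, hj, h⟩)
    · intro j hj y hy
      rcases Finset.mem_union.mp (hsg' j hy) with h | h
      · exact Finset.mem_union_left _ h
      · exact Finset.mem_union_right _ (Finset.mem_biUnion.mpr ⟨j, hj, h⟩)
    · calc (V ∪ Γ.biUnion N).card ≤ V.card + (Γ.biUnion N).card := Finset.card_union_le _ _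
        _ ≤ V.card + ∑ j ∈ Γ, (N j).card := by
            have := Finset.card_biUnion_le (s := Γ) (t := N)
            omega
        _ ≤ V.card + ∑ _j ∈ Γ, (16 * u + 14) :=
            Nat.add_le_add_left (Finset.sum_le_sum (fun j _ => hNc j)) _
        _ = V.card + Γ.card * (16 * u + 14) := by rw [Finset.sum_const, smul_eq_mul]
        _ ≤ Γ.card * (8 * u * u + 6 * u + 2) + Γ.card * (16 * u + 14) := by omega
        _ = Γ.card * (8 * (u+1) * (u+1) + 6 * (u+1) + 2) := by ring

end Levels

section Top
variable [DecidableEq α]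

lemma sz_of_mem_subs : ∀ (v : BT α), ∀ w ∈ subs v, sz w ≤ sz v := by
  intro v
  induction v with
  | leaf a => simp [subs]
  | node l r ihl ihr =>
    intro w hw
    simp only [subs, Finset.mem_insert, Finset.mem_union] at hw
    rcases hw with h | h | h
    · rw [h]
    · have := ihl w h
      have := sz_lt_left l r
      omega
    · have := ihr w h
      have := sz_lt_right l r
      omega

/-- Top assembly: a tree for the whole string with few distinct subtrees. -/
lemma top_tree (S : List α) (Γ : Finset ℕ) (hA : IsAttractor S Γ) (hS : S ≠ []) :
    ∃ t : BT α, flat t = S ∧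
      (subs t).card ≤ 24 * Γ.card * (Nat.log 2 (S.length / Γ.card) + 1) ^ 2 := by
  set n := S.length with hn
  have hn1 : 1 ≤ n := by
    rw [hn]
    cases S
    · exact absurd rfl hS
    · simp
  have hγ1 : 1 ≤ Γ.card := by
    obtain ⟨i', hi', heq, j, hj, _⟩ := hA.2 0 n (by omega) (by omega)
    exact Finset.card_pos.mpr ⟨j, hj⟩
  set L := Nat.log 2 (n / Γ.card) + 1 with hL
  set M := 2 ^ L with hM
  have hdivM : n / Γ.card + 1 ≤ M := by
    have h := Nat.lt_pow_succ_log_self (b := 2) (by norm_num) (n / Γ.card)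
    have h2 : (2:ℕ) ^ (Nat.log 2 (n / Γ.card)).succ = M := by
      rw [hM, hL]
    omega
  have hγM : n + 1 ≤ Γ.card * M := by
    have h2 : Γ.card * (n / Γ.card) + n % Γ.card = n := Nat.div_add_mod n Γ.card
    have h3 : n % Γ.card < Γ.card := Nat.mod_lt _ (by omega)
    have h4 : Γ.card * (n / Γ.card + 1) ≤ Γ.card * M := Nat.mul_le_mul_left Γ.card hdivM
    rw [Nat.mul_add, Nat.mul_one] at h4
    omega
  obtain ⟨f, g, V, hf, hg, hhf, hhg, hVf, hVg, hVcard⟩ := levels S Γ hA L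
  -- fold the pieces of S
  have fold : ∀ k : ℕ, ∃ (T : Option (BT α)) (N : Finset (BT α)),
      oflat T = slc S 0 (k * M) ∧ osubs T ⊆ V ∪ N ∧ N.card ≤ k * (4 * L + 4) := by
    intro k
    induction k with
    | zero => exact ⟨none, ∅, by simp [oflat, slc_self], by simp [osubs], by simp⟩
    | succ k ih =>
      obtain ⟨T, N, h1, h2, h3⟩ := ih
      have hwin : (k * M + M) - k * M ≤ 2 * 2 ^ L := by
        rw [Nat.add_sub_cancel_left, hM]
        omega
      obtain ⟨P, NP, hp1, hp2, hp3, hp4⟩ := window S Γ hA L f g V hf hg hhf hhg hVf hVg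
        (k * M) (k * M + M) hwin
      obtain ⟨E, hE, hEc⟩ := osubs_onode T P
      refine ⟨onode T P, N ∪ NP ∪ E, ?_, ?_, ?_⟩
      · rw [oflat_onode, h1, hp1, ← slc_append S (by omega) (by omega), Nat.succ_mul]
      · intro y hy
        rcases Finset.mem_union.mp (hE hy) with h | h
        · rcases Finset.mem_union.mp h with h' | h'
          · rcases Finset.mem_union.mp (h2 h') with h'' | h''
            · exact Finset.mem_union_left _ h''
            · exact Finset.mem_union_right _
                (Finset.mem_union_left _ (Finset.mem_union_left _ h''))
          · rcases Finset.mem_union.mp (hp3 h') with h'' | h''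
            · exact Finset.mem_union_left _ h''
            · exact Finset.mem_union_right _
                (Finset.mem_union_left _ (Finset.mem_union_right _ h''))
        · exact Finset.mem_union_right _ (Finset.mem_union_right _ h)
      · have c1 := Finset.card_union_le (N ∪ NP) E
        have c2 := Finset.card_union_le N NP
        have c3 : (k + 1) * (4 * L + 4) = k * (4 * L + 4) + (4 * L + 4) := by ring
        omega
  obtain ⟨T, N, h1, h2, h3⟩ := fold Γ.card
  have hTS : oflat T = S := by
    rw [h1, slc_zero S _ (by omega)]
  obtain ⟨t, ht⟩ : ∃ t, T = some t := by
    cases hT : T with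
    | none => rw [hT] at hTS; exact absurd hTS.symm hS
    | some t => exact ⟨t, rfl⟩
  refine ⟨t, by rw [← hTS, ht]; rfl, ?_⟩
  have hsub : subs t ⊆ V ∪ N := by rw [ht] at h2; exact h2
  have hcard : (subs t).card ≤ V.card + N.card := by
    calc (subs t).card ≤ (V ∪ N).card := Finset.card_le_card hsub
      _ ≤ V.card + N.card := Finset.card_union_le _ _
  have hL1 : 1 ≤ L := by rw [hL]; omega
  calc (subs t).card ≤ V.card + N.card := hcard
    _ ≤ Γ.card * (8 * L * L + 6 * L + 2) + Γ.card * (4 * L + 4) :=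
        Nat.add_le_add hVcard h3
    _ = Γ.card * (8 * L * L + 10 * L + 6) := by ring
    _ ≤ Γ.card * (24 * (L * L)) := by
        apply Nat.mul_le_mul_left
        nlinarith
    _ = 24 * Γ.card * L ^ 2 := by ring

end Top

/-! ### From trees to SLPs -/

section ToSLP
variable [DecidableEq α]

def emptySLP (α : Type) : SLP α where
  g := 0
  rhs := fun k => k.elim0
  lt₁ := fun k => k.elim0
  lt₂ := fun k => k.elim0
  exp := fun k => k.elim0
  exp_spec := fun k => k.elim0

lemma slp_of_closed_aux (n : ℕ) : ∀ (F : Finset (BT α)), F.card = n →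
    (∀ u ∈ F, ∃ l r, u = BT.node l r) → (∀ u ∈ F, subs u ⊆ F) →
    ∃ P : SLP α, P.g = F.card ∧ ∀ u ∈ F, ∃ k : Fin P.g, P.exp k = flat u := by
  induction n with
  | zero =>
    intro F hcard _ _
    refine ⟨emptySLP α, by rw [hcard]; rfl, ?_⟩
    intro u hu
    rw [Finset.card_eq_zero.mp hcard] at hu
    exact absurd hu (Finset.notMem_empty u)
  | succ n ih =>
    intro F hcard hnode hcl
    have hne : F.Nonempty := Finset.card_pos.mp (by omega)
    obtain ⟨u, huF, humax⟩ := Finset.exists_max_image F sz hne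
    obtain ⟨l, r, hu⟩ := hnode u huF
    set F' := F.erase u with hF'
    have hcard' : F'.card = n := by
      rw [hF', Finset.card_erase_of_mem huF, hcard]
      omega
    have hF'sub : F' ⊆ F := Finset.erase_subset _ _
    have hnode' : ∀ v ∈ F', ∃ x y, v = BT.node x y := fun v hv => hnode v (hF'sub hv)
    have hcl' : ∀ v ∈ F', subs v ⊆ F' := by
      intro v hv w hw
      have hvF : v ∈ F := hF'sub hv
      have hwF : w ∈ F := hcl v hvF hw
      have hvne : v ≠ u := Finset.ne_of_mem_erase hv
      rw [hF', Finset.mem_erase]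
      refine ⟨?_, hwF⟩
      intro hwu
      obtain ⟨x, y, hv'⟩ := hnode v hvF
      rw [hv'] at hw
      simp only [subs, Finset.mem_insert, Finset.mem_union] at hw
      rcases hw with h | h | h
      · exact hvne (by rw [hv', ← hwu, h])
      · have h1 : sz w ≤ sz x := sz_of_mem_subs x w h
        have h2 : sz x < sz (BT.node x y) := sz_lt_left x y
        have h3 : sz (BT.node x y) ≤ sz u := by rw [← hv']; exact humax v hvF
        rw [hwu] at h1
        omega
      · have h1 : sz w ≤ sz y := sz_of_mem_subs y w h
        have h2 : sz y < sz (BT.node x y) := sz_lt_right x y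
        have h3 : sz (BT.node x y) ≤ sz u := by rw [← hv']; exact humax v hvF
        rw [hwu] at h1
        omega
    obtain ⟨P', hg', hsym'⟩ := ih F' hcard' hnode' hcl'
    -- symbols for the two children of u
    have get : ∀ c : BT α, (c = l ∨ c = r) →
        ∃ s : Fin P'.g ⊕ α, Sum.elim P'.exp (fun a => [a]) s = flat c := by
      intro c hc
      cases c with
      | leaf a => exact ⟨Sum.inr a, rfl⟩
      | node x y =>
        have hcsub : BT.node x y ∈ subs u := by
          rw [hu]
          simp only [subs, Finset.mem_insert, Finset.mem_union]
          rcases hc with h | h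
          · right; left; rw [← h]; exact mem_subs_node x y
          · right; right; rw [← h]; exact mem_subs_node x y
        have hcF : BT.node x y ∈ F := hcl u huF hcsub
        have hcne : BT.node x y ≠ u := by
          intro he
          have h1 : sz (BT.node x y) ≤ sz l ∨ sz (BT.node x y) ≤ sz r := by
            rcases hc with h | h
            · left; rw [h]
            · right; rw [h]
          have h2 : sz l < sz u := by rw [hu]; exact sz_lt_left l r
          have h3 : sz r < sz u := by rw [hu]; exact sz_lt_right l r
          rw [he] at h1
          omega
        have hcF' : BT.node x y ∈ F' := by
          rw [hF', Finset.mem_erase]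
          exact ⟨hcne, hcF⟩
        obtain ⟨k, hk⟩ := hsym' _ hcF'
        exact ⟨Sum.inl k, hk⟩
    obtain ⟨sl, hsl⟩ := get l (Or.inl rfl)
    obtain ⟨sr, hsr⟩ := get r (Or.inr rfl)
    -- build the extended SLP
    set emb : Fin P'.g ⊕ α → Fin (P'.g + 1) ⊕ α := Sum.map Fin.castSucc id with hemb
    set rhsN : Fin (P'.g + 1) → (Fin (P'.g + 1) ⊕ α) × (Fin (P'.g + 1) ⊕ α) :=
      Fin.snoc (fun k => (emb (P'.rhs k).1, emb (P'.rhs k).2)) (emb sl, emb sr) with hrhsN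
    set expN : Fin (P'.g + 1) → List α := Fin.snoc P'.exp (flat u) with hexpN
    have hrhs_cast : ∀ k : Fin P'.g,
        rhsN k.castSucc = (emb (P'.rhs k).1, emb (P'.rhs k).2) := by
      intro k
      rw [hrhsN]
      exact Fin.snoc_castSucc _ _ _
    have hrhs_last : rhsN (Fin.last P'.g) = (emb sl, emb sr) := by
      rw [hrhsN]
      exact Fin.snoc_last _ _
    have hexpN_cast : ∀ k : Fin P'.g, expN k.castSucc = P'.exp k := by
      intro k
      rw [hexpN]
      exact Fin.snoc_castSucc _ _ _
    have hexpN_last : expN (Fin.last P'.g) = flat u := by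
      rw [hexpN]
      exact Fin.snoc_last _ _
    have hembsym : ∀ s : Fin P'.g ⊕ α,
        Sum.elim expN (fun a => [a]) (emb s) = Sum.elim P'.exp (fun a => [a]) s := by
      intro s
      cases s with
      | inl k =>
        simp only [hemb, Sum.map_inl, Sum.elim_inl]
        exact hexpN_cast k
      | inr a => simp [hemb]
    have hemb_inl : ∀ (s : Fin P'.g ⊕ α) (i : Fin (P'.g + 1)),
        emb s = Sum.inl i → (i : ℕ) < P'.g := by
      intro s i h
      cases s with
      | inl k =>
        rw [hemb] at h
        simp only [Sum.map_inl, Sum.inl.injEq] at h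
        rw [← h]
        simpa using k.isLt
      | inr a => rw [hemb] at h; simp at h
    refine ⟨⟨P'.g + 1, rhsN, ?_, ?_, expN, ?_⟩, ?_, ?_⟩
    · -- lt₁
      intro k
      induction k using Fin.lastCases with
      | last =>
        intro i hi
        rw [hrhs_last] at hi
        have := hemb_inl sl i hi
        simpa using this
      | cast k' =>
        intro i hi
        rw [hrhs_cast k'] at hi
        cases hr : (P'.rhs k').1 with
        | inl i₀ =>
          rw [hr, hemb] at hi
          simp only [Sum.map_inl, Sum.inl.injEq] at hi
          have := P'.lt₁ k' i₀ hr
          rw [← hi]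
          simpa using this
        | inr a => rw [hr, hemb] at hi; simp at hi
    · -- lt₂
      intro k
      induction k using Fin.lastCases with
      | last =>
        intro i hi
        rw [hrhs_last] at hi
        have := hemb_inl sr i hi
        simpa using this
      | cast k' =>
        intro i hi
        rw [hrhs_cast k'] at hi
        cases hr : (P'.rhs k').2 with
        | inl i₀ =>
          rw [hr, hemb] at hi
          simp only [Sum.map_inl, Sum.inl.injEq] at hi
          have := P'.lt₂ k' i₀ hr
          rw [← hi]
          simpa using this
        | inr a => rw [hr, hemb] at hi; simp at hi
    · -- exp_spec
      intro k
      induction k using Fin.lastCases with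
      | last =>
        rw [hexpN_last, hrhs_last]
        show flat u
          = Sum.elim expN (fun a => [a]) (emb sl) ++ Sum.elim expN (fun a => [a]) (emb sr)
        rw [hembsym sl, hembsym sr, hsl, hsr, hu]
        rfl
      | cast k' =>
        rw [hexpN_cast k', hrhs_cast k']
        show P'.exp k' = Sum.elim expN (fun a => [a]) (emb (P'.rhs k').1)
          ++ Sum.elim expN (fun a => [a]) (emb (P'.rhs k').2)
        rw [hembsym, hembsym]
        exact P'.exp_spec k'
    · -- size
      show P'.g + 1 = F.card
      omega
    · -- members
      intro v hv
      by_cases hvu : v = u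
      · refine ⟨Fin.last P'.g, ?_⟩
        show expN (Fin.last P'.g) = flat v
        rw [hvu]
        exact hexpN_last
      · have hvF' : v ∈ F' := by rw [hF', Finset.mem_erase]; exact ⟨hvu, hv⟩
        obtain ⟨k, hk⟩ := hsym' v hvF'
        refine ⟨k.castSucc, ?_⟩
        show expN k.castSucc = flat v
        rw [hexpN_cast k]
        exact hk

lemma slp_of_tree (t : BT α) :
    ∃ (P : SLP α) (s : Fin P.g ⊕ α), P.symExp s = flat t ∧ P.g = (subs t).card := by
  cases t with
  | leaf a =>
    refine ⟨emptySLP α, Sum.inr a, rfl, ?_⟩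
    simp [emptySLP, subs]
  | node l r =>
    have hcl : ∀ u ∈ subs (BT.node l r), subs u ⊆ subs (BT.node l r) := by
      intro u hu
      obtain ⟨x, y, hxy⟩ := subs_is_node _ u hu
      rw [hxy]
      rw [hxy] at hu
      obtain ⟨h1, h2⟩ := subs_closed _ x y hu
      intro w hw
      simp only [subs, Finset.mem_insert, Finset.mem_union] at hw
      rcases hw with h | h | h
      · rw [h]; exact hu
      · exact h1 h
      · exact h2 h
    obtain ⟨P, hg, hsym⟩ := slp_of_closed_aux (subs (BT.node l r)).card
      (subs (BT.node l r)) rfl (subs_is_node _) hcl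
    obtain ⟨k, hk⟩ := hsym _ (mem_subs_node l r)
    exact ⟨P, Sum.inl k, hk, hg⟩

end ToSLP

end AttSLP

/-- Given a nonempty string `T` of length `n` with a string attractor of size
`γ`, there exists an SLP generating exactly `T` of size `O(γ log²(n/γ))`. -/
theorem stmt14 : ∃ C : ℕ, 0 < C ∧ ∀ (α : Type) (S : List α), S ≠ [] →
    ∀ Γ : Finset ℕ, IsAttractor S Γ →
    ∃ (P : SLP α) (s : Fin P.g ⊕ α), P.symExp s = S ∧
      P.g ≤ C * Γ.card * (Nat.log 2 (S.length / Γ.card) + 1) ^ 2 := by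
  refine ⟨24, by norm_num, ?_⟩
  intro α S hS Γ hA
  letI := Classical.decEq α
  obtain ⟨t, hflat, hcard⟩ := AttSLP.top_tree S Γ hA hS
  obtain ⟨P, s, hsym, hg⟩ := AttSLP.slp_of_tree t
  exact ⟨P, s, by rw [hsym, hflat], by rw [hg]; exact hcard⟩
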